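/- arXiv:1309.6090 — 6 statements merged into one kernel-verified Lean document; each statement's English description precedes it below -/
import Mathlib

section
/- Let G be a controllable graph on n vertices with adjacency matrix A. Then G is determined by its generalized spectrum (i.e., every graph H on n vertices such that A(H) is cospectral with A(G) and the complement of H is cospectral with the complement of G is isomorphic to G) if and only if every rational orthogonal n×n matrix Q satisfying Qe = e for the all-ones vector e and such that QᵀAQ is a symmetric (0,1)-matrix with zero diagonal is a permutation matrix. -/
/-!
For controllable `G`, an orthogonal `Q` with `Qe = e` is determined by `QᵀAQ`: if `Q₁` and `Q₂`
give the same conjugate, then `Q₂Q₁ᵀ` commutes with `A` and fixes `e`, hence fixes every column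
`Aʲe` of the invertible walk matrix `W`, so it is the identity. Every admissible `Q` makes `QᵀAQ`
the adjacency matrix of a graph `H` cospectral with `G`, with cospectral complements because `Q`
fixes `J = eeᵀ`; an isomorphism `G ≃ H` then gives a permutation matrix with the same conjugate,
which must be `Q`.

Conversely, graphs that are cospectral with cospectral complements have the same walk counts
`eᵀAᵏe`, hence the same matrices `WᵀAᵏW`, so `Q = W(G) W(H)⁻¹` is orthogonal, fixes `e` and
conjugates `A(G)` into `A(H)`; if `Q` is a permutation matrix, `G ≅ H`. The walk counts are read
off coefficientwise from `det(1 - X(A + uvᵀ)) = det(1 - XA) - X vᵀ adj(1 - XA) u` and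
`adj(1 - XA) (1 - Xᵏ⁺¹Aᵏ⁺¹) = det(1 - XA) Σ_{i ≤ k} XⁱAⁱ`, using that `det(1 - XA)` has constant
term `1`.
-/

open Matrix

open scoped Classical in
/-- The (0,1)-adjacency matrix of a simple graph on `Fin n`, with entries in `R`. -/
noncomputable def adjMat {n : ℕ} (R : Type*) [Zero R] [One R] (G : SimpleGraph (Fin n)) :
    Matrix (Fin n) (Fin n) R :=
  Matrix.of fun i j => if G.Adj i j then 1 else 0

/-- The walk matrix `W = [e, Ae, A²e, …, A^{n−1}e]` of a square matrix `A`,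
where `e` is the all-ones vector: the `j`-th column is `A^j e`. -/
noncomputable def walkMatrix {R : Type*} [CommRing R] {n : ℕ} (A : Matrix (Fin n) (Fin n) R) :
    Matrix (Fin n) (Fin n) R :=
  Matrix.of fun i j => (A ^ (j : ℕ) *ᵥ fun _ => 1) i

open Polynomial

namespace Matrix

variable {n R : Type*} [Fintype n] [DecidableEq n]

theorem det_add_vecMulVec_of_isUnit [CommRing R] {A : Matrix n n R} (hA : IsUnit A.det)
    (u v : n → R) : (A + vecMulVec u v).det = A.det + v ⬝ᵥ (adjugate A *ᵥ u) := by
  rw [vecMulVec_eq Unit, det_add_replicateCol_mul_replicateRow hA, det_unique (n := Unit), inv_def,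
    Matrix.mul_assoc, Matrix.smul_mul, Matrix.mul_smul, ← replicateCol_mulVec, add_apply,
    one_apply_eq, smul_apply, replicateRow_mul_replicateCol_apply, smul_eq_mul, mul_add, mul_one,
    ← mul_assoc, Ring.mul_inverse_cancel _ hA, one_mul]

theorem det_add_vecMulVec [CommRing R] [IsDomain R] {A : Matrix n n R} (hA : A.det ≠ 0)
    (u v : n → R) : (A + vecMulVec u v).det = A.det + v ⬝ᵥ (adjugate A *ᵥ u) := by
  let f := algebraMap R (FractionRing R)
  have hf : Function.Injective f := IsFractionRing.injective R (FractionRing R)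
  have hA' : IsUnit (f.mapMatrix A).det := by
    rw [← RingHom.map_det]
    exact ((map_ne_zero_iff f hf).mpr hA).isUnit
  apply hf
  calc f (A + vecMulVec u v).det = (f.mapMatrix A + vecMulVec (f ∘ u) (f ∘ v)).det := by
        rw [RingHom.map_det, map_add]
        congr 2
        ext i j
        simp [vecMulVec_apply]
    _ = (f.mapMatrix A).det + (f ∘ v) ⬝ᵥ (f.mapMatrix A.adjugate *ᵥ (f ∘ u)) := by
        rw [det_add_vecMulVec_of_isUnit hA', RingHom.map_adjugate]
    _ = f (A.det + v ⬝ᵥ (adjugate A *ᵥ u)) := by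
        rw [map_add, RingHom.map_det, RingHom.map_dotProduct]
        congr 2
        funext i
        exact (RingHom.map_mulVec f A.adjugate u i).symm

variable [CommRing R]

/-- The numerator of the walk generating function:
`Σₖ (v ⬝ᵥ Mᵏ *ᵥ u) Xᵏ = M.walkNumerator u v / M.charpolyRev` as formal power series. -/
noncomputable def walkNumerator (M : Matrix n n R) (u v : n → R) : R[X] :=
  (C ∘ v) ⬝ᵥ (adjugate (1 - (X : R[X]) • M.map C) *ᵥ (C ∘ u))

theorem charpolyRev_add_vecMulVec [IsDomain R] (M : Matrix n n R) (u v : n → R) :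
    (M + vecMulVec u v).charpolyRev = M.charpolyRev - X * M.walkNumerator u v := by
  have hM : M.charpolyRev ≠ 0 := fun h => by simpa [h] using M.eval_charpolyRev
  have hsplit : 1 - (X : R[X]) • (M + vecMulVec u v).map C
      = (1 - (X : R[X]) • M.map C) + vecMulVec (-((X : R[X]) • (C ∘ u))) (C ∘ v) := by
    ext i j : 1
    simp [vecMulVec_apply]
    ring
  rw [charpolyRev, hsplit, det_add_vecMulVec hM, mulVec_neg, mulVec_smul, dotProduct_neg,
    dotProduct_smul, smul_eq_mul, ← sub_eq_add_neg, charpolyRev, walkNumerator]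

theorem dotProduct_map_C_pow_mulVec (M : Matrix n n R) (u v : n → R) (i : ℕ) :
    (C ∘ v) ⬝ᵥ (M.map C ^ i *ᵥ (C ∘ u)) = C (v ⬝ᵥ (M ^ i *ᵥ u)) := by
  rw [RingHom.map_dotProduct]
  congr 1
  funext j
  rw [Function.comp_apply, RingHom.map_mulVec, ← RingHom.mapMatrix_apply,
    ← RingHom.mapMatrix_apply, map_pow]

theorem coeff_walkNumerator (M : Matrix n n R) (u v : n → R) (k : ℕ) :
    (M.walkNumerator u v).coeff k =
      ∑ i ∈ Finset.range (k + 1), M.charpolyRev.coeff (k - i) * (v ⬝ᵥ (M ^ i *ᵥ u)) := by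
  set T : Matrix n n R[X] := (X : R[X]) • M.map C
  set Y := adjugate (1 - T)
  have hY : Y * (1 - T ^ (k + 1)) = M.charpolyRev • ∑ i ∈ Finset.range (k + 1), T ^ i := by
    rw [← mul_neg_geom_sum, ← Matrix.mul_assoc, adjugate_mul, smul_mul, Matrix.one_mul]
    rfl
  have hsplit : M.walkNumerator u v
      = X ^ (k + 1) * ((C ∘ v) ⬝ᵥ ((Y * M.map C ^ (k + 1)) *ᵥ (C ∘ u)))
        + ∑ i ∈ Finset.range (k + 1), M.charpolyRev * X ^ i * C (v ⬝ᵥ (M ^ i *ᵥ u)) := by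
    have hY' : Y = (X : R[X]) ^ (k + 1) • (Y * M.map C ^ (k + 1))
        + M.charpolyRev • ∑ i ∈ Finset.range (k + 1), T ^ i := by
      rw [← hY, Matrix.mul_sub, Matrix.mul_one, _root_.smul_pow, Matrix.mul_smul]
      abel
    change (C ∘ v) ⬝ᵥ (Y *ᵥ (C ∘ u)) = _
    conv_lhs => rw [hY']
    rw [add_mulVec, dotProduct_add, smul_mulVec, dotProduct_smul, smul_eq_mul, smul_mulVec,
      dotProduct_smul, smul_eq_mul, sum_mulVec, dotProduct_sum, Finset.mul_sum]
    congr 1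
    refine Finset.sum_congr rfl fun i _ => ?_
    rw [_root_.smul_pow, smul_mulVec, dotProduct_smul, smul_eq_mul, dotProduct_map_C_pow_mulVec,
      mul_assoc]
  rw [hsplit, coeff_add, coeff_X_pow_mul', if_neg (by omega), zero_add, finsetSum_coeff]
  refine Finset.sum_congr rfl fun i hi => ?_
  rw [coeff_mul_C, coeff_mul_X_pow', if_pos (by simp at hi; omega)]

theorem dotProduct_pow_mulVec_eq_of_walkNumerator_eq {M M' : Matrix n n R} {u v : n → R}
    (hρ : M.charpolyRev = M'.charpolyRev) (hw : M.walkNumerator u v = M'.walkNumerator u v)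
    (k : ℕ) : v ⬝ᵥ (M ^ k *ᵥ u) = v ⬝ᵥ (M' ^ k *ᵥ u) := by
  induction k using Nat.strong_induction_on with
  | _ k ih =>
    -- the `i = k` term of `coeff_walkNumerator` has coefficient `charpolyRev.coeff 0 = 1`
    have h := congrArg (coeff · k) hw
    simp only [coeff_walkNumerator, Finset.sum_range_succ, Nat.sub_self, hρ] at h
    rw [Finset.sum_congr rfl fun i hi => by rw [ih i (Finset.mem_range.mp hi)]] at h
    simpa [coeff_zero_eq_eval_zero] using h

theorem dotProduct_pow_mulVec_eq_of_charpoly_eq [IsDomain R] {M M' : Matrix n n R}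
    (u v : n → R) (h : M.charpoly = M'.charpoly)
    (h' : (M + vecMulVec u v).charpoly = (M' + vecMulVec u v).charpoly) (k : ℕ) :
    v ⬝ᵥ (M ^ k *ᵥ u) = v ⬝ᵥ (M' ^ k *ᵥ u) := by
  have hρ : M.charpolyRev = M'.charpolyRev := by rw [← reverse_charpoly, h, reverse_charpoly]
  have hρ' := congrArg reverse h'
  rw [reverse_charpoly, reverse_charpoly, charpolyRev_add_vecMulVec, charpolyRev_add_vecMulVec,
    hρ] at hρ'
  exact dotProduct_pow_mulVec_eq_of_walkNumerator_eq hρ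
    (mul_left_cancel₀ X_ne_zero (sub_right_injective hρ')) k

theorem charpoly_neg (M : Matrix n n R) :
    (-M).charpoly = (-1) ^ Fintype.card n * M.charpoly.comp (-X) := by
  have h : charmatrix (-M) = -(compRingHom (-X : R[X])).mapMatrix (charmatrix M) := by
    ext i j : 1
    by_cases hij : i = j
    · subst hij
      simp [charmatrix_apply_eq]
      ring
    · simp [charmatrix_apply_ne _ _ _ hij]
  rw [charpoly, h, det_neg, ← RingHom.map_det]
  rfl

theorem charpoly_neg_sub_one_congr {M M' : Matrix n n R} (h : M.charpoly = M'.charpoly) :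
    (-M - 1).charpoly = (-M' - 1).charpoly := by
  have h1 : ∀ N : Matrix n n R,
      (-N - 1).charpoly = ((-1) ^ Fintype.card n * N.charpoly.comp (-X)).comp (X + C 1) := by
    intro N
    rw [← charpoly_neg, ← charpoly_sub_scalar, map_one]
  rw [h1, h1, h]

theorem charpoly_transpose_mul_mul {Q : Matrix n n R} (hQ : Qᵀ * Q = 1) (M : Matrix n n R) :
    (Qᵀ * M * Q).charpoly = M.charpoly := by
  rw [charpoly_mul_comm, ← Matrix.mul_assoc, mul_eq_one_comm.mp hQ, Matrix.one_mul]

theorem mulVec_eq_self_iff_transpose_mulVec_eq_self {Q : Matrix n n R} (hQ : Qᵀ * Q = 1)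
    {v : n → R} : Q *ᵥ v = v ↔ Qᵀ *ᵥ v = v := by
  constructor <;> intro h <;> conv_lhs => rw [← h]
  · rw [mulVec_mulVec, hQ, one_mulVec]
  · rw [mulVec_mulVec, mul_eq_one_comm.mp hQ, one_mulVec]

theorem transpose_mul_vecMulVec_mul {Q : Matrix n n R} (hQ : Qᵀ * Q = 1) {v : n → R}
    (hv : Q *ᵥ v = v) : Qᵀ * vecMulVec v v * Q = vecMulVec v v := by
  have hv' := (mulVec_eq_self_iff_transpose_mulVec_eq_self hQ).mp hv
  rw [mul_vecMulVec, hv', vecMulVec_mul, ← mulVec_transpose, hv']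

theorem transpose_permMatrix_mul_mul_permMatrix (σ : Equiv.Perm n) (M : Matrix n n R) :
    (σ.permMatrix R)ᵀ * M * σ.permMatrix R = M.reindex σ σ := by
  rw [transpose_permMatrix, Equiv.Perm.permMatrix, PEquiv.toMatrix_toPEquiv_mul,
    Equiv.Perm.permMatrix, PEquiv.mul_toMatrix_toPEquiv]
  rfl

theorem transpose_permMatrix_mul_permMatrix (σ : Equiv.Perm n) :
    (σ.permMatrix R)ᵀ * σ.permMatrix R = 1 := by
  simpa using transpose_permMatrix_mul_mul_permMatrix σ (1 : Matrix n n R)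

end Matrix

section walkMatrix

variable {n : ℕ} {R : Type*} [CommRing R]

theorem mul_walkMatrix_of_commute {A P : Matrix (Fin n) (Fin n) R} (hc : Commute A P)
    (he : P *ᵥ (fun _ => 1) = fun _ => 1) : P * walkMatrix A = walkMatrix A := by
  ext i j
  change (P *ᵥ (A ^ (j : ℕ) *ᵥ fun _ => 1)) i = _
  rw [mulVec_mulVec, ← (hc.pow_left j).eq, ← mulVec_mulVec, he]
  rfl

theorem eq_one_of_commute_of_mulVec_eq {A P : Matrix (Fin n) (Fin n) R}
    (hW : IsUnit (walkMatrix A).det) (hc : Commute A P) (he : P *ᵥ (fun _ => 1) = fun _ => 1) :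
    P = 1 :=
  ((isUnit_iff_isUnit_det _).mpr hW).mul_right_cancel
    (by rw [mul_walkMatrix_of_commute hc he, Matrix.one_mul])

theorem eq_of_transpose_mul_mul_eq {A Q₁ Q₂ : Matrix (Fin n) (Fin n) R}
    (hW : IsUnit (walkMatrix A).det) (hQ₁ : Q₁ᵀ * Q₁ = 1) (hQ₂ : Q₂ᵀ * Q₂ = 1)
    (he₁ : Q₁ *ᵥ (fun _ => 1) = fun _ => 1) (he₂ : Q₂ *ᵥ (fun _ => 1) = fun _ => 1)
    (h : Q₁ᵀ * A * Q₁ = Q₂ᵀ * A * Q₂) : Q₁ = Q₂ := by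
  have hQ₁' : Q₁ * Q₁ᵀ = 1 := mul_eq_one_comm.mp hQ₁
  have hQ₂' : Q₂ * Q₂ᵀ = 1 := mul_eq_one_comm.mp hQ₂
  have hc : Commute A (Q₂ * Q₁ᵀ) := by
    have := congrArg (Q₂ * · * Q₁ᵀ) h
    simp only [← Matrix.mul_assoc, hQ₂', Matrix.one_mul] at this
    simp only [Matrix.mul_assoc, hQ₁', Matrix.mul_one] at this
    show A * (Q₂ * Q₁ᵀ) = Q₂ * Q₁ᵀ * A
    rw [Matrix.mul_assoc, this]
  have he : (Q₂ * Q₁ᵀ) *ᵥ (fun _ => 1) = fun _ => 1 := by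
    rw [← mulVec_mulVec, (mulVec_eq_self_iff_transpose_mulVec_eq_self hQ₁).mp he₁, he₂]
  have h1 := eq_one_of_commute_of_mulVec_eq hW hc he
  calc Q₁ = Q₂ * Q₁ᵀ * Q₁ := by rw [h1, Matrix.one_mul]
    _ = Q₂ := by rw [Matrix.mul_assoc, hQ₁, Matrix.mul_one]

theorem transpose_walkMatrix_mul_mul_walkMatrix_apply {A : Matrix (Fin n) (Fin n) R}
    (hA : Aᵀ = A) (k : ℕ) (i j : Fin n) :
    ((walkMatrix A)ᵀ * A ^ k * walkMatrix A) i j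
      = (fun _ => 1) ⬝ᵥ (A ^ (i + k + j : ℕ) *ᵥ fun _ => 1) := by
  have hcol : ((walkMatrix A)ᵀ * A ^ k * walkMatrix A) i j
      = (A ^ (i : ℕ) *ᵥ fun _ => 1) ⬝ᵥ (A ^ k *ᵥ (A ^ (j : ℕ) *ᵥ fun _ => 1)) := by
    rw [Matrix.mul_assoc]
    rfl
  have hrow : (A ^ (i : ℕ) *ᵥ fun _ => (1 : R)) = (fun _ => 1) ᵥ* A ^ (i : ℕ) := by
    rw [← mulVec_transpose, transpose_pow, hA]
  rw [hcol, hrow, ← dotProduct_mulVec, mulVec_mulVec, mulVec_mulVec, ← pow_add, ← pow_add]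

theorem exists_orthogonal_conj_of_walks_eq {A B : Matrix (Fin n) (Fin n) R} (hA : Aᵀ = A)
    (hB : Bᵀ = B) (hW : IsUnit (walkMatrix A).det)
    (hwalk : ∀ k, (fun _ => 1) ⬝ᵥ (B ^ k *ᵥ fun _ => 1) = (fun _ => 1) ⬝ᵥ (A ^ k *ᵥ fun _ => 1)) :
    ∃ Q : Matrix (Fin n) (Fin n) R,
      Qᵀ * Q = 1 ∧ Q *ᵥ (fun _ => 1) = (fun _ => 1) ∧ Qᵀ * A * Q = B := by
  set WA := walkMatrix A
  set WB := walkMatrix B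
  have hgram : ∀ k, WBᵀ * B ^ k * WB = WAᵀ * A ^ k * WA := fun k => by
    ext i j
    rw [transpose_walkMatrix_mul_mul_walkMatrix_apply hB,
      transpose_walkMatrix_mul_mul_walkMatrix_apply hA, hwalk]
  have hWB : IsUnit WB.det := by
    have h := congrArg det (hgram 0)
    simp only [pow_zero, Matrix.mul_one, det_mul, det_transpose] at h
    exact isUnit_of_mul_isUnit_left (h ▸ hW.mul hW)
  have hconj : ∀ k, (WA * WB⁻¹)ᵀ * A ^ k * (WA * WB⁻¹) = B ^ k := fun k => by
    calc (WA * WB⁻¹)ᵀ * A ^ k * (WA * WB⁻¹) = WBᵀ⁻¹ * (WAᵀ * A ^ k * WA) * WB⁻¹ := by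
          simp only [transpose_mul, transpose_nonsing_inv, Matrix.mul_assoc]
      _ = B ^ k := by
          rw [← hgram, Matrix.mul_assoc, Matrix.mul_assoc, Matrix.mul_nonsing_inv _ hWB,
            Matrix.mul_one, ← Matrix.mul_assoc, Matrix.nonsing_inv_mul _ (by rwa [det_transpose]),
            Matrix.one_mul]
  have hQ : (WA * WB⁻¹)ᵀ * (WA * WB⁻¹) = 1 := by simpa using hconj 0
  refine ⟨WA * WB⁻¹, hQ, ?_, by simpa using hconj 1⟩
  have hrow : (fun _ => 1) ᵥ* WA = (fun _ => 1) ᵥ* WB := funext fun j => (hwalk j).symm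
  rw [mulVec_eq_self_iff_transpose_mulVec_eq_self hQ, mulVec_transpose, ← vecMul_vecMul, hrow,
    vecMul_vecMul, Matrix.mul_nonsing_inv _ hWB, vecMul_one]

end walkMatrix

section adjMat

variable {n : ℕ}

theorem adjMat_eq_adjMatrix (R : Type*) [Zero R] [One R] (G : SimpleGraph (Fin n))
    [DecidableRel G.Adj] : adjMat R G = G.adjMatrix R := by
  ext i j
  simp [adjMat]

theorem isAdjMatrix_adjMat (R : Type*) [Zero R] [One R] (G : SimpleGraph (Fin n)) :
    (adjMat R G).IsAdjMatrix := by
  classical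
  rw [adjMat_eq_adjMatrix]
  exact G.isAdjMatrix_adjMatrix R

theorem adjMat_compl (R : Type*) [Ring R] (G : SimpleGraph (Fin n)) :
    adjMat R Gᶜ = vecMulVec (fun _ => 1) (fun _ => 1) - 1 - adjMat R G := by
  classical
  rw [adjMat_eq_adjMatrix, adjMat_eq_adjMatrix, sub_sub, eq_sub_iff_add_eq, add_comm, add_assoc,
    SimpleGraph.IsCompl.adjMatrix_add_adjMatrix_eq_adjMatrix_completeGraph R isCompl_compl,
    SimpleGraph.adjMatrix_completeGraph_eq_of_one_sub_one, add_sub_cancel]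
  ext i j
  simp [vecMulVec_apply]

theorem adjMat_add_vecMulVec_neg (R : Type*) [Ring R] (G : SimpleGraph (Fin n)) :
    adjMat R G + vecMulVec (fun _ => 1) (-fun _ => 1) = -adjMat R Gᶜ - 1 := by
  rw [adjMat_compl, vecMulVec_neg]
  abel

theorem adjMat_toGraph {R : Type*} [MulZeroOneClass R] [Nontrivial R]
    {A : Matrix (Fin n) (Fin n) R} (h : A.IsAdjMatrix) : adjMat R h.toGraph = A := by
  ext i j
  rcases h.zero_or_one i j with h' | h' <;> simp [adjMat, h']

theorem reindex_adjMat {R : Type*} [Zero R] [One R] {G H : SimpleGraph (Fin n)} (φ : G ≃g H) :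
    (adjMat R G).reindex φ.toEquiv φ.toEquiv = adjMat R H := by
  classical
  rw [adjMat_eq_adjMatrix, adjMat_eq_adjMatrix]
  exact φ.reindex_adjMatrix R

theorem nonempty_iso_of_reindex_adjMat_eq {R : Type*} [Zero R] [One R] [NeZero (1 : R)]
    {G H : SimpleGraph (Fin n)} (σ : Fin n ≃ Fin n)
    (h : (adjMat R G).reindex σ σ = adjMat R H) : Nonempty (G ≃g H) := by
  refine ⟨⟨σ, fun {a b} => ?_⟩⟩
  have := congrFun₂ h (σ a) (σ b)
  by_cases hG : G.Adj a b <;> by_cases hH : H.Adj (σ a) (σ b) <;> simp_all [adjMat]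

theorem dotProduct_adjMat_pow_mulVec_eq_of_charpoly_eq {R : Type*} [CommRing R] [IsDomain R]
    {G H : SimpleGraph (Fin n)} (h : (adjMat R H).charpoly = (adjMat R G).charpoly)
    (hc : (adjMat R Hᶜ).charpoly = (adjMat R Gᶜ).charpoly) (k : ℕ) :
    (fun _ => 1) ⬝ᵥ (adjMat R H ^ k *ᵥ fun _ => 1)
      = (fun _ => 1) ⬝ᵥ (adjMat R G ^ k *ᵥ fun _ => 1) := by
  have h' := dotProduct_pow_mulVec_eq_of_charpoly_eq _ _ h
    (by rw [adjMat_add_vecMulVec_neg, adjMat_add_vecMulVec_neg]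
        exact charpoly_neg_sub_one_congr hc) k
  simpa only [neg_dotProduct, neg_inj] using h'

end adjMat

section determination

variable {n : ℕ} {R : Type*} [CommRing R] {G : SimpleGraph (Fin n)}

theorem exists_eq_permMatrix_of_forall_iso [Nontrivial R]
    (hW : IsUnit (walkMatrix (adjMat R G)).det)
    (hG : ∀ H : SimpleGraph (Fin n), (adjMat R H).charpoly = (adjMat R G).charpoly →
        (adjMat R Hᶜ).charpoly = (adjMat R Gᶜ).charpoly → Nonempty (G ≃g H))
    {Q : Matrix (Fin n) (Fin n) R} (hQ : Qᵀ * Q = 1) (he : Q *ᵥ (fun _ => 1) = fun _ => 1)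
    (hB : (Qᵀ * adjMat R G * Q).IsAdjMatrix) : ∃ σ : Equiv.Perm (Fin n), Q = σ.permMatrix R := by
  have hH := adjMat_toGraph hB
  have hcompl : adjMat R hB.toGraphᶜ = Qᵀ * adjMat R Gᶜ * Q := by
    rw [adjMat_compl, hH, adjMat_compl, Matrix.mul_sub, Matrix.mul_sub, Matrix.sub_mul,
      Matrix.sub_mul, transpose_mul_vecMulVec_mul hQ he, Matrix.mul_one, hQ]
  obtain ⟨φ⟩ := hG hB.toGraph (by rw [hH, charpoly_transpose_mul_mul hQ])
    (by rw [hcompl, charpoly_transpose_mul_mul hQ])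
  refine ⟨φ.toEquiv, eq_of_transpose_mul_mul_eq hW hQ (transpose_permMatrix_mul_permMatrix _) he
    (by rw [permMatrix_mulVec]; rfl) ?_⟩
  rw [transpose_permMatrix_mul_mul_permMatrix, reindex_adjMat, hH]

theorem nonempty_iso_of_forall_eq_permMatrix [IsDomain R]
    (hW : IsUnit (walkMatrix (adjMat R G)).det)
    (hG : ∀ Q : Matrix (Fin n) (Fin n) R, Qᵀ * Q = 1 → Q *ᵥ (fun _ => 1) = (fun _ => 1) →
        (Qᵀ * adjMat R G * Q).IsAdjMatrix → ∃ σ : Equiv.Perm (Fin n), Q = σ.permMatrix R)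
    {H : SimpleGraph (Fin n)} (h : (adjMat R H).charpoly = (adjMat R G).charpoly)
    (hc : (adjMat R Hᶜ).charpoly = (adjMat R Gᶜ).charpoly) : Nonempty (G ≃g H) := by
  obtain ⟨Q, hQ, he, hconj⟩ := exists_orthogonal_conj_of_walks_eq (isAdjMatrix_adjMat R G).symm
    (isAdjMatrix_adjMat R H).symm hW (dotProduct_adjMat_pow_mulVec_eq_of_charpoly_eq h hc)
  obtain ⟨σ, rfl⟩ := hG Q hQ he (hconj ▸ isAdjMatrix_adjMat R H)
  exact nonempty_iso_of_reindex_adjMat_eq (R := R) σ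
    (by rw [← transpose_permMatrix_mul_mul_permMatrix, hconj])

end determination

/-- A controllable graph `G` is determined by its generalized spectrum
iff every rational orthogonal matrix `Q` with `Qe = e` such that `QᵀAQ` is a symmetric
(0,1)-matrix with zero diagonal is a permutation matrix. -/
theorem stmt_1 {n : ℕ} (G : SimpleGraph (Fin n))
    (A : Matrix (Fin n) (Fin n) ℚ) (hA : A = adjMat ℚ G)
    (hctrl : (walkMatrix A).det ≠ 0) :
    (∀ H : SimpleGraph (Fin n),
        (adjMat ℚ H).charpoly = A.charpoly →
        (adjMat ℚ (Hᶜ)).charpoly = (adjMat ℚ (Gᶜ)).charpoly →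
        Nonempty (G ≃g H)) ↔
      (∀ Q : Matrix (Fin n) (Fin n) ℚ,
        Qᵀ * Q = 1 → Q *ᵥ (fun _ => 1) = (fun _ => 1) →
        (Qᵀ * A * Q).IsSymm →
        (∀ i j, (Qᵀ * A * Q) i j = 0 ∨ (Qᵀ * A * Q) i j = 1) →
        (∀ i, (Qᵀ * A * Q) i i = 0) →
        ∃ σ : Equiv.Perm (Fin n), Q = σ.permMatrix ℚ) := by
  subst hA
  exact ⟨fun hG _ hQ he hsymm h01 hdiag =>
      exists_eq_permMatrix_of_forall_iso hctrl.isUnit hG hQ he ⟨h01, hsymm, hdiag⟩,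
    fun hG _ => nonempty_iso_of_forall_eq_permMatrix hctrl.isUnit
      (fun _ hQ he hB => hG _ hQ he hB.symm hB.zero_or_one hB.apply_diag)⟩
end

section
/- Let G be a controllable graph on n vertices with integer walk matrix W, and suppose W = U·diag(d₁,…,dₙ)·V where U and V are unimodular integer matrices (det = ±1) and dᵢ divides dᵢ₊₁ for i = 1,…,n−1. Let Q be a rational orthogonal matrix with Qe = e such that QᵀA(G)Q is a symmetric (0,1)-matrix with zero diagonal, and let ℓ be the level of Q, i.e., the smallest positive integer such that ℓQ has integer entries. Then ℓ divides dₙ. -/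
open Matrix

private lemma walkMatrix_map_int {n : ℕ} (M : Matrix (Fin n) (Fin n) ℤ) :
    (walkMatrix M).map (Int.cast : ℤ → ℚ) = walkMatrix (M.map (Int.cast : ℤ → ℚ)) := by
  ext i j
  have hpow : (M ^ (j : ℕ)).map (Int.cast : ℤ → ℚ) = (M.map (Int.cast : ℤ → ℚ)) ^ (j : ℕ) := by
    simpa using map_pow ((Int.castRingHom ℚ).mapMatrix) M (j : ℕ)
  simp [walkMatrix, Matrix.map_apply, Matrix.mulVec, dotProduct, ← hpow]

private lemma mul_walkMatrix_apply {n : ℕ} (M A : Matrix (Fin n) (Fin n) ℚ) (i j : Fin n) :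
    (M * walkMatrix A) i j = (M *ᵥ (A ^ (j : ℕ) *ᵥ fun _ => 1)) i := by
  simp [walkMatrix, Matrix.mul_apply, Matrix.mulVec, dotProduct]

/-- **Theorem 2.3 (a).** The level `ℓ` of any `Q ∈ 𝒬_G` divides the last
elementary divisor `dₙ` of the Smith normal form of the walk matrix `W`. -/
theorem stmt_2 {n : ℕ} (hn : 0 < n) (G : SimpleGraph (Fin n))
    (A : Matrix (Fin n) (Fin n) ℚ) (hA : A = adjMat ℚ G)
    (W : Matrix (Fin n) (Fin n) ℤ) (hW : W = walkMatrix (adjMat ℤ G))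
    (hctrl : W.det ≠ 0)
    (U V : Matrix (Fin n) (Fin n) ℤ) (d : Fin n → ℤ)
    (hU : U.det = 1 ∨ U.det = -1) (hV : V.det = 1 ∨ V.det = -1)
    (hchain : ∀ (i : Fin n) (h : (i : ℕ) + 1 < n), d i ∣ d ⟨(i : ℕ) + 1, h⟩)
    (hSNF : W = U * Matrix.diagonal d * V)
    (Q : Matrix (Fin n) (Fin n) ℚ)
    (hQorth : Qᵀ * Q = 1) (hQe : Q *ᵥ (fun _ => 1) = fun _ => 1)
    (hsymm : (Qᵀ * A * Q).IsSymm)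
    (h01 : ∀ i j, (Qᵀ * A * Q) i j = 0 ∨ (Qᵀ * A * Q) i j = 1)
    (hdiag : ∀ i, (Qᵀ * A * Q) i i = 0)
    (ℓ : ℕ)
    (hlevel : IsLeast {m : ℕ | 0 < m ∧ ∀ i j, ∃ z : ℤ, (m : ℚ) * Q i j = (z : ℚ)} ℓ) :
    (ℓ : ℤ) ∣ d ⟨n - 1, by omega⟩ := by
  classical
  set last : Fin n := ⟨n - 1, by omega⟩ with hlast
  -- basic facts about Q
  have hQQt : Q * Qᵀ = 1 := mul_eq_one_comm.mp hQorth
  have hQte : Qᵀ *ᵥ (fun _ => (1 : ℚ)) = fun _ => 1 := by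
    conv_lhs => rw [← hQe]
    rw [Matrix.mulVec_mulVec, hQorth, Matrix.one_mulVec]
  set B : Matrix (Fin n) (Fin n) ℚ := Qᵀ * A * Q with hB
  have hQtA : Qᵀ * A = B * Qᵀ := by
    rw [hB, Matrix.mul_assoc, Matrix.mul_assoc, hQQt, Matrix.mul_one]
  have hQtApow : ∀ j : ℕ, Qᵀ * A ^ j = B ^ j * Qᵀ := by
    intro j
    induction j with
    | zero => simp
    | succ j ih =>
      rw [pow_succ, pow_succ, ← Matrix.mul_assoc, ih, Matrix.mul_assoc, hQtA,
        ← Matrix.mul_assoc]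
  -- Qᵀ * walkMatrix A = walkMatrix B
  have hQW : Qᵀ * walkMatrix A = walkMatrix B := by
    ext i j
    rw [mul_walkMatrix_apply, Matrix.mulVec_mulVec, hQtApow, ← Matrix.mulVec_mulVec, hQte]
    simp [walkMatrix]
  -- integer version of B
  set Bz : Matrix (Fin n) (Fin n) ℤ := Matrix.of fun i j => if B i j = 1 then 1 else 0 with hBzdef
  have hBz : Bz.map (Int.cast : ℤ → ℚ) = B := by
    ext i j
    rcases h01 i j with h | h
    · simp [hBzdef, Matrix.map_apply, h]
    · simp [hBzdef, Matrix.map_apply, h]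
  have hAcast : (adjMat ℤ G).map (Int.cast : ℤ → ℚ) = A := by
    ext i j
    simp only [adjMat, hA, Matrix.map_apply, Matrix.of_apply]
    split <;> simp
  set N : Matrix (Fin n) (Fin n) ℤ := walkMatrix Bz with hNdef
  have hWcast : W.map (Int.cast : ℤ → ℚ) = walkMatrix A := by
    rw [hW, walkMatrix_map_int, hAcast]
  have hN : N.map (Int.cast : ℤ → ℚ) = Qᵀ * W.map (Int.cast : ℤ → ℚ) := by
    rw [hNdef, walkMatrix_map_int, hBz, hWcast, hQW]
  -- unimodular inverses
  have hUdet : IsUnit U.det := by rcases hU with h | h <;> simp [h]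
  have hVdet : IsUnit V.det := by rcases hV with h | h <;> simp [h]
  haveI : Invertible U := U.invertibleOfIsUnitDet hUdet
  haveI : Invertible V := V.invertibleOfIsUnitDet hVdet
  -- divisibility chain up to the last elementary divisor
  have hmono : ∀ b (hb : b < n) a (ha : a < n), a ≤ b → d ⟨a, ha⟩ ∣ d ⟨b, hb⟩ := by
    intro b
    induction b with
    | zero =>
      intro hb a ha hab
      have : a = 0 := Nat.le_zero.mp hab
      subst this; exact dvd_rfl
    | succ b ih =>
      intro hb a ha hab
      rcases Nat.lt_or_ge a (b + 1) with h' | h'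
      · exact (ih (by omega) a ha (by omega)).trans (hchain ⟨b, by omega⟩ hb)
      · have : a = b + 1 := le_antisymm hab h'
        subst this; exact dvd_rfl
  have hdlast : ∀ i : Fin n, d i ∣ d last := fun i => hmono (n - 1) (by omega) i i.2 (by omega)
  -- nonvanishing of elementary divisors
  have hdet : W.det = U.det * (∏ i, d i) * V.det := by
    rw [hSNF, Matrix.det_mul, Matrix.det_mul, Matrix.det_diagonal]
  have hprod : (∏ i, d i) ≠ 0 := by
    intro h
    apply hctrl
    rw [hdet, h, mul_zero, zero_mul]
  have hdne : ∀ i, d i ≠ 0 := by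
    intro i h
    exact hprod (Finset.prod_eq_zero (Finset.mem_univ i) h)
  -- the key integer matrix identity
  set g : Fin n → ℤ := fun i => d last / d i with hg
  have hDg : Matrix.diagonal d * Matrix.diagonal g =
      Matrix.diagonal (fun _ : Fin n => d last) := by
    rw [Matrix.diagonal_mul_diagonal]
    have : (fun i => d i * g i) = fun _ : Fin n => d last :=
      funext fun i => Int.mul_ediv_cancel' (hdlast i)
    rw [this]
  set M : Matrix (Fin n) (Fin n) ℤ := N * ⅟V * Matrix.diagonal g * ⅟U with hM
  have hkey : M.map (Int.cast : ℤ → ℚ) = (d last : ℚ) • Qᵀ := by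
    have cast_mul : ∀ (X Y : Matrix (Fin n) (Fin n) ℤ),
        (X * Y).map (Int.cast : ℤ → ℚ) = X.map Int.cast * Y.map Int.cast := by
      intro X Y
      simpa using map_mul ((Int.castRingHom ℚ).mapMatrix) X Y
    have hVVi : (V.map (Int.cast : ℤ → ℚ)) * ((⅟V : Matrix (Fin n) (Fin n) ℤ).map Int.cast) = 1 := by
      rw [← cast_mul, mul_invOf_self]; simp
    have hUUi : (U.map (Int.cast : ℤ → ℚ)) * ((⅟U : Matrix (Fin n) (Fin n) ℤ).map Int.cast) = 1 := by
      rw [← cast_mul, mul_invOf_self]; simp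
    have hNform : N.map (Int.cast : ℤ → ℚ) =
        Qᵀ * U.map Int.cast * (Matrix.diagonal d).map Int.cast * V.map Int.cast := by
      rw [hN, hSNF, cast_mul, cast_mul, Matrix.mul_assoc, Matrix.mul_assoc, Matrix.mul_assoc]
    rw [hM, cast_mul, cast_mul, cast_mul, hNform]
    rw [Matrix.mul_assoc (Qᵀ * U.map Int.cast * (Matrix.diagonal d).map Int.cast), hVVi,
      Matrix.mul_one]
    have hDgc : (Matrix.diagonal d).map (Int.cast : ℤ → ℚ) *
        (Matrix.diagonal g).map (Int.cast : ℤ → ℚ) =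
        (d last : ℚ) • (1 : Matrix (Fin n) (Fin n) ℚ) := by
      rw [← cast_mul, hDg]
      have h1 : (Matrix.diagonal (fun _ : Fin n => d last)).map (Int.cast : ℤ → ℚ) =
          Matrix.diagonal (fun _ : Fin n => (d last : ℚ)) := Matrix.diagonal_map (by simp)
      rw [h1]
      ext i j
      by_cases h : i = j
      · subst h; simp
      · simp [Matrix.diagonal_apply_ne _ h, Matrix.smul_apply, Matrix.one_apply_ne h]
    rw [Matrix.mul_assoc (Qᵀ * U.map Int.cast), hDgc]
    rw [Matrix.mul_smul, Matrix.mul_one, Matrix.smul_mul, Matrix.mul_assoc, hUUi, Matrix.mul_one]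
  -- entrywise integrality of (d last) • Q
  have hint : ∀ i j, (d last : ℚ) * Q i j = ((M j i : ℤ) : ℚ) := by
    intro i j
    have := congrFun (congrFun hkey j) i
    simpa [Matrix.map_apply, Matrix.smul_apply, Matrix.transpose_apply] using this.symm
  -- finish via minimality
  obtain ⟨⟨hℓpos, hℓQ⟩, hlb⟩ := hlevel
  set m : ℕ := (d last).natAbs with hm
  have hm0 : 0 < m := Int.natAbs_pos.mpr (hdne last)
  have hmQ : ∀ i j, ∃ z : ℤ, (m : ℚ) * Q i j = (z : ℚ) := by
    intro i j
    rcases Int.natAbs_eq (d last) with h | h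
    · refine ⟨M j i, ?_⟩
      have : ((m : ℤ) : ℚ) = (d last : ℚ) := by rw [← h]
      rw [show ((m : ℕ) : ℚ) = ((m : ℤ) : ℚ) by push_cast; ring, this, hint]
    · refine ⟨-(M j i), ?_⟩
      have : ((m : ℤ) : ℚ) = -(d last : ℚ) := by
        rw [show -(d last : ℚ) = ((-(d last) : ℤ) : ℚ) by push_cast; ring]
        congr 1
        omega
      rw [show ((m : ℕ) : ℚ) = ((m : ℤ) : ℚ) by push_cast; ring, this]
      rw [neg_mul, hint]
      push_cast; ring
  have hdvd : ℓ ∣ m := by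
    by_contra hnd
    set r : ℕ := m % ℓ with hr
    have hr0 : r ≠ 0 := fun h => hnd (Nat.dvd_of_mod_eq_zero h)
    have hrlt : r < ℓ := Nat.mod_lt _ hℓpos
    have hrS : r ∈ {m : ℕ | 0 < m ∧ ∀ i j, ∃ z : ℤ, (m : ℚ) * Q i j = (z : ℚ)} := by
      refine ⟨Nat.pos_of_ne_zero hr0, fun i j => ?_⟩
      obtain ⟨zm, hzm⟩ := hmQ i j
      obtain ⟨zl, hzl⟩ := hℓQ i j
      set q : ℕ := m / ℓ with hq
      refine ⟨zm - (q : ℤ) * zl, ?_⟩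
      have hsplit : (m : ℚ) = (ℓ : ℚ) * (q : ℚ) + (r : ℚ) := by
        have h := Nat.div_add_mod m ℓ
        have h2 : ((ℓ * (m / ℓ) + m % ℓ : ℕ) : ℚ) = (m : ℚ) := by rw [h]
        push_cast at h2
        rw [hr, hq]
        linarith
      have hexp : (r : ℚ) * Q i j = (m : ℚ) * Q i j - (q : ℚ) * ((ℓ : ℚ) * Q i j) := by
        rw [hsplit]; ring
      rw [hexp, hzm, hzl]
      push_cast; ring
    exact absurd (hlb hrS) (by omega)
  have : (ℓ : ℤ) ∣ ((m : ℕ) : ℤ) := Int.ofNat_dvd.mpr hdvd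
  rw [hm] at this
  exact Int.dvd_natAbs.mp this
end

section
/- Let G be a controllable graph on n vertices with adjacency matrix A and walk matrix W. Let Q be a rational orthogonal matrix with Qe = e such that QᵀAQ is a symmetric (0,1)-matrix with zero diagonal, with level ℓ, and let p be a prime dividing ℓ. Then the system of congruences Wᵀx ≡ 0 (mod p) and xᵀx ≡ 0 (mod p) has a solution x with x ≢ 0 (mod p). -/
open Matrix

lemma walkMatrix_map {n : ℕ} (A : Matrix (Fin n) (Fin n) ℤ) :
    (walkMatrix A).map (Int.cast : ℤ → ℚ) = walkMatrix (A.map (Int.cast : ℤ → ℚ)) := by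
  ext i j
  have hpow : (A.map (Int.cast : ℤ → ℚ)) ^ (j : ℕ) = (A ^ (j : ℕ)).map Int.cast := by
    have := map_pow ((Int.castRingHom ℚ).mapMatrix) A (j : ℕ)
    simpa [RingHom.mapMatrix_apply] using this.symm
  simp [walkMatrix, hpow, mulVec, dotProduct]

/-- **Theorem 2.3 (b).** If a prime `p` divides the level `ℓ` of some
`Q ∈ 𝒬_G`, then the system `Wᵀx ≡ 0, xᵀx ≡ 0 (mod p)` has a nontrivial solution. -/
theorem stmt_3 {n : ℕ} (G : SimpleGraph (Fin n))
    (A : Matrix (Fin n) (Fin n) ℚ) (hA : A = adjMat ℚ G)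
    (W : Matrix (Fin n) (Fin n) ℤ) (hW : W = walkMatrix (adjMat ℤ G))
    (hctrl : W.det ≠ 0)
    (Q : Matrix (Fin n) (Fin n) ℚ)
    (hQorth : Qᵀ * Q = 1) (hQe : Q *ᵥ (fun _ => 1) = fun _ => 1)
    (hsymm : (Qᵀ * A * Q).IsSymm)
    (h01 : ∀ i j, (Qᵀ * A * Q) i j = 0 ∨ (Qᵀ * A * Q) i j = 1)
    (hdiag : ∀ i, (Qᵀ * A * Q) i i = 0)
    (ℓ : ℕ)
    (hlevel : IsLeast {m : ℕ | 0 < m ∧ ∀ i j, ∃ z : ℤ, (m : ℚ) * Q i j = (z : ℚ)} ℓ)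
    (p : ℕ) (hp : p.Prime) (hpl : p ∣ ℓ) :
    ∃ x : Fin n → ℤ,
      (∀ i, (p : ℤ) ∣ (Wᵀ *ᵥ x) i) ∧ (p : ℤ) ∣ x ⬝ᵥ x ∧ ¬(∀ i, (p : ℤ) ∣ x i) := by
  classical
  obtain ⟨⟨hℓpos, hℓint⟩, hmin⟩ := hlevel
  choose Mf hMf using hℓint
  set M : Matrix (Fin n) (Fin n) ℤ := Matrix.of Mf with hMdef
  have hMcast : M.map (Int.cast : ℤ → ℚ) = (ℓ : ℚ) • Q := by
    ext i j
    simp [hMdef, ← hMf i j]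
  -- Q * Qᵀ = 1
  have hQQT : Q * Qᵀ = 1 := mul_eq_one_comm.mp hQorth
  -- B over ℚ and ℤ
  set Bq : Matrix (Fin n) (Fin n) ℚ := Qᵀ * A * Q with hBq
  set Bz : Matrix (Fin n) (Fin n) ℤ := Matrix.of (fun i j => if Bq i j = 1 then 1 else 0)
    with hBz
  have hBcast : Bz.map (Int.cast : ℤ → ℚ) = Bq := by
    ext i j
    rcases h01 i j with h | h <;> simp [hBz, h]
  -- A * Q = Q * Bq
  have hAQ : A * Q = Q * Bq := by
    rw [hBq, ← Matrix.mul_assoc, ← Matrix.mul_assoc, hQQT, Matrix.one_mul]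
  -- adjacency cast
  have hadj : (adjMat ℤ G).map (Int.cast : ℤ → ℚ) = A := by
    rw [hA]; ext i j; by_cases h : G.Adj i j <;> simp [adjMat, h]
  -- powers: A^k * Q = Q * Bq^k
  have hpowM : ∀ k : ℕ, A ^ k * Q = Q * Bq ^ k := by
    intro k
    induction k with
    | zero => simp
    | succ k ih =>
        rw [pow_succ, pow_succ, Matrix.mul_assoc, hAQ, ← Matrix.mul_assoc, ih,
          Matrix.mul_assoc]
  have hpow : ∀ k : ℕ, A ^ k *ᵥ (fun _ => (1:ℚ)) = Q *ᵥ (Bq ^ k *ᵥ (fun _ => 1)) := by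
    intro k
    calc A ^ k *ᵥ (fun _ => (1:ℚ)) = A ^ k *ᵥ (Q *ᵥ fun _ => 1) := by rw [hQe]
      _ = (A ^ k * Q) *ᵥ (fun _ => 1) := Matrix.mulVec_mulVec _ _ _
      _ = (Q * Bq ^ k) *ᵥ (fun _ => 1) := by rw [hpowM]
      _ = Q *ᵥ (Bq ^ k *ᵥ fun _ => 1) := (Matrix.mulVec_mulVec _ _ _).symm
  -- walk matrices over ℚ
  have hwalk : walkMatrix A = Q * walkMatrix Bq := by
    ext i j
    have := congrFun (hpow (j : ℕ)) i
    simp only [walkMatrix, Matrix.of_apply]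
    rw [this]
    simp [Matrix.mul_apply, mulVec, dotProduct]
  have hWcast : W.map (Int.cast : ℤ → ℚ) = walkMatrix A := by
    rw [hW, walkMatrix_map, hadj]
  have hWBcast : (walkMatrix Bz).map (Int.cast : ℤ → ℚ) = walkMatrix Bq := by
    rw [walkMatrix_map, hBcast]
  -- key integer identity: Wᵀ * M = ℓ • (walkMatrix Bz)ᵀ
  have castinj : Function.Injective
      (fun X : Matrix (Fin n) (Fin n) ℤ => X.map (Int.cast : ℤ → ℚ)) := by
    intro X Y h
    ext i j
    have h2 : X.map (Int.cast : ℤ → ℚ) i j = Y.map (Int.cast : ℤ → ℚ) i j := by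
      rw [show X.map (Int.cast : ℤ → ℚ) = Y.map (Int.cast : ℤ → ℚ) from h]
    simp only [Matrix.map_apply] at h2
    exact_mod_cast h2
  have hkey : Wᵀ * M = (ℓ : ℤ) • (walkMatrix Bz)ᵀ := by
    apply castinj
    show (Wᵀ * M).map _ = ((ℓ:ℤ) • (walkMatrix Bz)ᵀ).map _
    have h1 : (Wᵀ * M).map (Int.cast : ℤ → ℚ)
        = (W.map (Int.cast : ℤ → ℚ))ᵀ * (M.map (Int.cast : ℤ → ℚ)) := by
      ext i j
      simp only [Matrix.map_apply, Matrix.mul_apply, Matrix.transpose_apply]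
      push_cast
      rfl
    rw [h1, hWcast, hMcast, hwalk, Matrix.transpose_mul, Matrix.mul_smul,
      Matrix.mul_assoc, hQorth, Matrix.mul_one]
    ext i j
    simp only [Matrix.map_apply, Matrix.smul_apply, Matrix.transpose_apply,
      ← hWBcast, smul_eq_mul]
    push_cast
    ring
  have hMTM : Mᵀ * M = ((ℓ : ℤ) ^ 2) • (1 : Matrix (Fin n) (Fin n) ℤ) := by
    apply castinj
    show (Mᵀ * M).map _ = _
    have h1 : (Mᵀ * M).map (Int.cast : ℤ → ℚ)
        = (M.map (Int.cast : ℤ → ℚ))ᵀ * (M.map (Int.cast : ℤ → ℚ)) := by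
      ext i j
      simp only [Matrix.map_apply, Matrix.mul_apply, Matrix.transpose_apply]
      push_cast
      rfl
    rw [h1, hMcast, Matrix.transpose_smul, Matrix.smul_mul, Matrix.mul_smul, hQorth,
      smul_smul]
    ext i j
    simp only [Matrix.map_apply, Matrix.smul_apply, Matrix.one_apply, smul_eq_mul]
    by_cases h : i = j <;> simp [h, sq] <;> push_cast <;> ring
  -- some entry of M is not divisible by p
  have hex : ∃ j i, ¬ (p : ℤ) ∣ M i j := by
    by_contra hcon
    push_neg at hcon
    have hdvd : ∀ i j, (p : ℤ) ∣ M i j := fun i j => hcon j i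
    obtain ⟨m, hm⟩ := hpl
    have hple : ℓ ≤ m := by
      apply hmin
      constructor
      · rcases Nat.eq_zero_or_pos m with h0 | h0
        · exact absurd (by simp [hm, h0]) hℓpos.ne'
        · exact h0
      · intro i j
        obtain ⟨z, hz⟩ := hdvd i j
        refine ⟨z, ?_⟩
        have hℓQ : (ℓ : ℚ) * Q i j = (M i j : ℚ) := hMf i j
        have hp0 : (p : ℚ) ≠ 0 := by exact_mod_cast hp.pos.ne'
        have : (p : ℚ) * ((m : ℚ) * Q i j) = (p : ℚ) * (z : ℚ) := by
          rw [← mul_assoc, ← Nat.cast_mul, ← hm, hℓQ, hz]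
          push_cast
          ring
        exact mul_left_cancel₀ hp0 this
    have hm0 : 0 < m := by
      rcases Nat.eq_zero_or_pos m with h0 | h0
      · exact absurd (by simp [hm, h0]) hℓpos.ne'
      · exact h0
    have h2 : 2 ≤ p := hp.two_le
    nlinarith [hm, hple, hm0, h2]
  obtain ⟨j, i₀, hij⟩ := hex
  refine ⟨fun i => M i j, ?_, ?_, ?_⟩
  · intro i
    have : (Wᵀ *ᵥ fun i => M i j) i = (Wᵀ * M) i j := by
      simp [mulVec, Matrix.mul_apply, dotProduct]
    rw [this, hkey]
    exact Dvd.dvd.mul_right (Int.natCast_dvd_natCast.mpr hpl) _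
  · have : (fun i => M i j) ⬝ᵥ (fun i => M i j) = (Mᵀ * M) j j := by
      simp [Matrix.mul_apply, dotProduct, mul_comm]
    rw [this, hMTM]
    simp only [Matrix.smul_apply, Matrix.one_apply_eq, smul_eq_mul, mul_one]
    exact (Int.natCast_dvd_natCast.mpr hpl).trans (dvd_pow_self (ℓ:ℤ) two_ne_zero)
  · intro hall
    exact hij (hall i₀)
end

section
/- Let G be a controllable graph on n vertices with adjacency matrix A and walk matrix W. Let Q be a rational orthogonal matrix with Qe = e such that QᵀAQ is a symmetric (0,1)-matrix with zero diagonal, with level ℓ, and let p be an odd prime dividing ℓ. If the rank of W over the field with p elements is n−1, then the rank of the integer matrix ℓQ over the field with p elements is 1, and there exist an integer λ₀ and an integer vector z such that Az ≡ λ₀z (mod p), eᵀz ≡ 0 (mod p), zᵀz ≡ 0 (mod p), and z ≢ 0 (mod p). -/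
open Matrix

/-- **Lemma 3.2.** Let `p` be an odd prime dividing the level `ℓ` of
`Q ∈ 𝒬_G`, and suppose `rank_p W = n − 1`. Then `rank_p (ℓQ) = 1` and there are an
integer `λ₀` and an integer vector `z` with `Az ≡ λ₀z`, `eᵀz ≡ 0`, `zᵀz ≡ 0`,
`z ≢ 0 (mod p)`. -/
theorem stmt_5 {n : ℕ} (G : SimpleGraph (Fin n))
    (A : Matrix (Fin n) (Fin n) ℚ) (hA : A = adjMat ℚ G)
    (W : Matrix (Fin n) (Fin n) ℤ) (hW : W = walkMatrix (adjMat ℤ G))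
    (hctrl : W.det ≠ 0)
    (Q : Matrix (Fin n) (Fin n) ℚ)
    (hQorth : Qᵀ * Q = 1) (hQe : Q *ᵥ (fun _ => 1) = fun _ => 1)
    (hsymm : (Qᵀ * A * Q).IsSymm)
    (h01 : ∀ i j, (Qᵀ * A * Q) i j = 0 ∨ (Qᵀ * A * Q) i j = 1)
    (hdiag : ∀ i, (Qᵀ * A * Q) i i = 0)
    (ℓ : ℕ)
    (hlevel : IsLeast {m : ℕ | 0 < m ∧ ∀ i j, ∃ z : ℤ, (m : ℚ) * Q i j = (z : ℚ)} ℓ)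
    (p : ℕ) (hp : p.Prime) (hodd : Odd p) (hpl : p ∣ ℓ)
    (hrank : (W.map (Int.cast : ℤ → ZMod p)).rank = n - 1)
    (M : Matrix (Fin n) (Fin n) ℤ) (hM : ∀ i j, (M i j : ℚ) = (ℓ : ℚ) * Q i j) :
    (M.map (Int.cast : ℤ → ZMod p)).rank = 1 ∧
      ∃ (lam : ℤ) (z : Fin n → ℤ),
        (∀ i, (p : ℤ) ∣ ((adjMat ℤ G *ᵥ z) i - lam * z i)) ∧
        (p : ℤ) ∣ (fun _ => (1 : ℤ)) ⬝ᵥ z ∧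
        (p : ℤ) ∣ z ⬝ᵥ z ∧
        ¬(∀ i, (p : ℤ) ∣ z i) := by
  classical
  haveI : Fact p.Prime := ⟨hp⟩
  set K := ZMod p with hK
  have hℓpos : 0 < ℓ := hlevel.1.1
  -- n is positive
  have hn : 0 < n := by
    rcases Nat.eq_zero_or_pos n with h0 | h
    · exfalso
      subst h0
      have h1 : (1 : ℕ) ∈ {m : ℕ | 0 < m ∧ ∀ i j, ∃ z : ℤ, (m : ℚ) * Q i j = (z : ℚ)} :=
        ⟨one_pos, fun i => i.elim0⟩
      have hl1 : ℓ = 1 := le_antisymm (hlevel.2 h1) hℓpos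
      rw [hl1] at hpl
      exact hp.one_lt.ne' (Nat.dvd_one.mp hpl)
    · exact h
  -- casting ring homs
  set fQ : ℤ →+* ℚ := Int.castRingHom ℚ with hfQ
  set fK : ℤ →+* K := Int.castRingHom K with hfK
  have castinj : ∀ X Y : Matrix (Fin n) (Fin n) ℤ, X.map ⇑fQ = Y.map ⇑fQ → X = Y := by
    intro X Y h
    ext i j
    have := congrFun (congrFun h i) j
    simpa [Matrix.map_apply, hfQ] using this
  have hMmapQ : M.map ⇑fQ = (ℓ : ℚ) • Q := by
    ext i j
    simp [Matrix.map_apply, hfQ, hM i j]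
  have hAmapQ : (adjMat ℤ G).map ⇑fQ = A := by
    rw [hA]
    ext i j
    simp [adjMat, Matrix.map_apply, apply_ite (⇑fQ), hfQ]
  have hQQT : Q * Qᵀ = 1 := mul_eq_one_comm.mp hQorth
  have hQTe : Qᵀ *ᵥ (fun _ => (1:ℚ)) = fun _ => 1 := by
    conv_lhs => rw [← hQe]
    rw [Matrix.mulVec_mulVec, hQorth, Matrix.one_mulVec]
  -- the integer matrix B with B ≡ QᵀAQ
  set B : Matrix (Fin n) (Fin n) ℤ :=
    Matrix.of (fun i j => if (Qᵀ * A * Q) i j = 0 then 0 else 1) with hBdef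
  have hBmapQ : B.map ⇑fQ = Qᵀ * A * Q := by
    ext i j
    rcases h01 i j with h | h <;> simp [hBdef, Matrix.map_apply, h, hfQ]
  have hQBA : Q * (Qᵀ * A * Q) = A * Q := by
    rw [show Qᵀ * A * Q = Qᵀ * (A * Q) from mul_assoc _ _ _, ← mul_assoc, hQQT, one_mul]
  -- integer identity (c): AM = MB
  have hAM : adjMat ℤ G * M = M * B := by
    apply castinj
    rw [Matrix.map_mul, Matrix.map_mul, hAmapQ, hMmapQ, hBmapQ, Matrix.mul_smul,
      Matrix.smul_mul, hQBA]
  -- integer identity (b): MᵀM = ℓ² I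
  have hMTM : Mᵀ * M = ((ℓ : ℤ) ^ 2) • 1 := by
    apply castinj
    rw [Matrix.map_mul, Matrix.transpose_map, hMmapQ]
    have h2 : (((ℓ:ℤ)^2) • (1 : Matrix (Fin n) (Fin n) ℤ)).map ⇑fQ
        = ((ℓ:ℚ)^2) • (1 : Matrix (Fin n) (Fin n) ℚ) := by
      ext i j
      simp only [Matrix.map_apply, Matrix.smul_apply, Matrix.one_apply, smul_eq_mul,
        mul_ite, mul_one, mul_zero, apply_ite (⇑fQ)]
      by_cases h : i = j <;> simp [h, hfQ]
    rw [h2, Matrix.transpose_smul, Matrix.smul_mul, Matrix.mul_smul, hQorth, smul_smul, sq]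
  -- integer identity (d): Mᵀ e = ℓ e
  have hMTe : Mᵀ *ᵥ (fun _ => (1:ℤ)) = fun _ => (ℓ : ℤ) := by
    funext j
    have he : ⇑fQ ∘ (fun _ : Fin n => (1:ℤ)) = fun _ => (1:ℚ) := by
      funext i; simp [hfQ]
    have h1 : fQ ((Mᵀ *ᵥ fun _ => (1:ℤ)) j) = fQ ((ℓ:ℤ)) := by
      rw [RingHom.map_mulVec fQ Mᵀ (fun _ => 1) j, Matrix.transpose_map, hMmapQ, he,
        Matrix.transpose_smul, Matrix.smul_mulVec, hQTe]
      simp [hfQ]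
    exact Int.cast_injective h1
  -- walk matrix commutes with ring maps
  have hwalkmap : ∀ (X : Matrix (Fin n) (Fin n) ℤ),
      (walkMatrix X).map ⇑fQ = walkMatrix (X.map ⇑fQ) := by
    intro X
    ext i j
    simp only [walkMatrix, Matrix.map_apply, Matrix.of_apply]
    rw [RingHom.map_mulVec fQ]
    have hp' : (X ^ (j:ℕ)).map ⇑fQ = (X.map ⇑fQ) ^ (j:ℕ) := by
      simpa [RingHom.mapMatrix_apply] using map_pow fQ.mapMatrix X (j : ℕ)
    have he : ⇑fQ ∘ (fun _ : Fin n => (1:ℤ)) = fun _ => (1:ℚ) := by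
      funext k; simp [hfQ]
    rw [hp', he]
  -- Qᵀ · W_A = W_{QᵀAQ}
  have key : ∀ k : ℕ, Qᵀ * A ^ k = (Qᵀ * A * Q) ^ k * Qᵀ := by
    intro k
    induction k with
    | zero => simp
    | succ k ih =>
      have hQTA : Qᵀ * A = (Qᵀ * A * Q) * Qᵀ := by
        rw [mul_assoc, hQQT, mul_one]
      calc Qᵀ * A ^ (k+1) = (Qᵀ * A ^ k) * A := by
              rw [pow_succ]; exact (mul_assoc _ _ _).symm
        _ = (Qᵀ * A * Q) ^ k * (Qᵀ * A) := by rw [ih]; exact mul_assoc _ _ _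
        _ = (Qᵀ * A * Q) ^ k * ((Qᵀ * A * Q) * Qᵀ) :=
            congrArg (fun X => (Qᵀ * A * Q) ^ k * X) hQTA
        _ = (Qᵀ * A * Q) ^ (k+1) * Qᵀ := by rw [pow_succ]; exact (mul_assoc _ _ _).symm
  have hQTW : Qᵀ * walkMatrix A = walkMatrix (Qᵀ * A * Q) := by
    ext i j
    have h1 : (Qᵀ * walkMatrix A) i j = (Qᵀ *ᵥ (A ^ (j : ℕ) *ᵥ fun _ => 1)) i := by
      simp [Matrix.mul_apply, Matrix.mulVec, dotProduct, walkMatrix]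
    rw [h1, Matrix.mulVec_mulVec, key (j : ℕ), ← Matrix.mulVec_mulVec, hQTe]
    simp [walkMatrix]
  -- integer identity (a): MᵀW = ℓ · W_B
  have hMTW : Mᵀ * W = (ℓ : ℤ) • walkMatrix B := by
    apply castinj
    have hsm : ((ℓ:ℤ) • walkMatrix B).map ⇑fQ = (ℓ:ℚ) • ((walkMatrix B).map ⇑fQ) := by
      ext i j
      simp only [Matrix.map_apply, Matrix.smul_apply, smul_eq_mul, hfQ,
        Int.coe_castRingHom]
      push_cast
      ring
    rw [Matrix.map_mul, Matrix.transpose_map, hMmapQ, hW, hwalkmap, hAmapQ, hsm,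
      hwalkmap, hBmapQ, Matrix.transpose_smul, Matrix.smul_mul, hQTW]
  -- now pass to ZMod p
  set A' : Matrix (Fin n) (Fin n) K := (adjMat ℤ G).map ⇑fK with hA'
  set M' : Matrix (Fin n) (Fin n) K := M.map ⇑fK with hM'
  set W' : Matrix (Fin n) (Fin n) K := W.map ⇑fK with hW'
  set B' : Matrix (Fin n) (Fin n) K := B.map ⇑fK with hB'
  have hgoalM : M.map (Int.cast : ℤ → K) = M' := rfl
  have hgoalW : W.map (Int.cast : ℤ → K) = W' := rfl
  have hℓK : ((ℓ : ℤ) : K) = 0 := by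
    rw [Int.cast_natCast]
    exact (ZMod.natCast_eq_zero_iff ℓ p).mpr hpl
  -- M'ᵀ W' = 0 and W'ᵀ M' = 0
  have h0 : M'ᵀ * W' = 0 := by
    calc M'ᵀ * W' = (Mᵀ * W).map ⇑fK := by rw [Matrix.map_mul, Matrix.transpose_map]
      _ = ((ℓ:ℤ) • walkMatrix B).map ⇑fK := by rw [hMTW]
      _ = 0 := by
          ext i j
          simp only [Matrix.map_apply, Matrix.smul_apply, smul_eq_mul, hfK,
            Int.coe_castRingHom, Matrix.zero_apply, Int.cast_mul]
          rw [hℓK, zero_mul]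
  have hWM : W'ᵀ * M' = 0 := by
    calc W'ᵀ * M' = (M'ᵀ * W')ᵀ := by rw [Matrix.transpose_mul, Matrix.transpose_transpose]
      _ = 0 := by rw [h0, Matrix.transpose_zero]
  -- M' ≠ 0 by minimality of ℓ
  have hM'ne : M' ≠ 0 := by
    intro h
    have hdvd : ∀ i j, (p:ℤ) ∣ M i j := by
      intro i j
      have h1 : ((M i j : ℤ) : K) = 0 := by
        have := congrFun (congrFun h i) j
        simpa [hM', Matrix.map_apply, hfK] using this
      exact (ZMod.intCast_zmod_eq_zero_iff_dvd _ _).mp h1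
    obtain ⟨c, hc⟩ := hpl
    have hcpos : 0 < c := by
      rcases Nat.eq_zero_or_pos c with rfl | h'
      · omega
      · exact h'
    have hp0 : (p:ℚ) ≠ 0 := Nat.cast_ne_zero.mpr hp.pos.ne'
    have hmem : c ∈ {m : ℕ | 0 < m ∧ ∀ i j, ∃ z : ℤ, (m : ℚ) * Q i j = (z : ℚ)} := by
      refine ⟨hcpos, fun i j => ?_⟩
      obtain ⟨d, hd⟩ := hdvd i j
      refine ⟨d, ?_⟩
      have hcast : ((M i j : ℤ) : ℚ) = (ℓ:ℚ) * Q i j := hM i j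
      rw [hd, hc] at hcast
      push_cast at hcast
      have : (p:ℚ) * ((c:ℚ) * Q i j) = (p:ℚ) * (d:ℚ) := by linarith [hcast]
      have := mul_left_cancel₀ hp0 this
      linarith [this]
    have hle := hlevel.2 hmem
    rw [hc] at hle
    nlinarith [hp.two_le]
  -- a nonzero entry
  have hex : ∃ i j, M' i j ≠ 0 := by
    by_contra h
    push_neg at h
    exact hM'ne (by ext i j; simpa using h i j)
  obtain ⟨i₀, j₀, hij⟩ := hex
  -- the kernel of W'ᵀ
  set T : (Fin n → K) →ₗ[K] (Fin n → K) := W'ᵀ.mulVecLin with hT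
  have hrankT : Module.finrank K ↥(LinearMap.range T) = n - 1 := by
    have h2 : W'ᵀ.rank = n - 1 := by rw [Matrix.rank_transpose]; exact hrank
    exact h2
  have hkerdim : Module.finrank K ↥(LinearMap.ker T) = 1 := by
    have h1 := LinearMap.finrank_range_add_finrank_ker T
    rw [hrankT] at h1
    have h2 : Module.finrank K (Fin n → K) = n := by simp
    omega
  -- columns of M' lie in ker T
  have hcol : ∀ k, (fun i => M' i k) ∈ LinearMap.ker T := by
    intro k
    rw [LinearMap.mem_ker]
    show W'ᵀ *ᵥ (fun i => M' i k) = 0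
    funext i
    have := congrFun (congrFun hWM i) k
    simpa [Matrix.mul_apply, Matrix.mulVec, dotProduct] using this
  set z' : Fin n → K := fun i => M' i j₀ with hz'
  have hz'ne : z' ≠ 0 := by
    intro h
    exact hij (congrFun h i₀)
  have hz'ker : z' ∈ LinearMap.ker T := hcol j₀
  have hspanle : Submodule.span K {z'} ≤ LinearMap.ker T := by
    rw [Submodule.span_le, Set.singleton_subset_iff]
    exact hz'ker
  have hker_eq : Submodule.span K {z'} = LinearMap.ker T := by
    apply Submodule.eq_of_le_of_finrank_le hspanle
    rw [hkerdim, finrank_span_singleton hz'ne]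
  -- rank M' = 1
  have hrangele : LinearMap.range M'.mulVecLin ≤ LinearMap.ker T := by
    rintro x ⟨v, rfl⟩
    rw [LinearMap.mem_ker]
    show W'ᵀ *ᵥ (M' *ᵥ v) = 0
    rw [Matrix.mulVec_mulVec, hWM, Matrix.zero_mulVec]
  have hrle : M'.rank ≤ 1 := by
    have h1 := Submodule.finrank_mono hrangele
    rw [hkerdim] at h1
    exact h1
  have hz'range : z' ∈ LinearMap.range M'.mulVecLin := by
    refine ⟨Pi.single j₀ 1, ?_⟩
    show M' *ᵥ Pi.single j₀ 1 = z'
    funext i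
    simp [Matrix.mulVec_single, hz']
  have hrge : 1 ≤ M'.rank := by
    have h3 : Submodule.span K {z'} ≤ LinearMap.range M'.mulVecLin := by
      rw [Submodule.span_le, Set.singleton_subset_iff]; exact hz'range
    have h4 := Submodule.finrank_mono h3
    rw [finrank_span_singleton hz'ne] at h4
    exact h4
  have hrank1 : M'.rank = 1 := le_antisymm hrle hrge
  -- coefficients expressing each column of M' as a multiple of z'
  have hcoef : ∀ k, ∃ c : K, (fun i => M' i k) = c • z' := by
    intro k
    have h1 := hcol k
    rw [← hker_eq, Submodule.mem_span_singleton] at h1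
    obtain ⟨c, hc⟩ := h1
    exact ⟨c, hc.symm⟩
  choose c hc using hcoef
  -- A' M' = M' B'
  have hAMK : A' * M' = M' * B' := by
    rw [hA', hM', hB', ← Matrix.map_mul, ← Matrix.map_mul, hAM]
  -- eigenvalue
  set μ : K := ∑ k, c k * B' k j₀ with hμ
  have hAz' : ∀ i, (A' *ᵥ z') i = μ * z' i := by
    intro i
    have h1 : (A' *ᵥ z') i = (A' * M') i j₀ := by
      simp [Matrix.mul_apply, Matrix.mulVec, dotProduct, hz']
    rw [h1, hAMK]
    have h2 : (M' * B') i j₀ = ∑ k, (c k * z' i) * B' k j₀ := by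
      rw [Matrix.mul_apply]
      refine Finset.sum_congr rfl fun k _ => ?_
      have := congrFun (hc k) i
      simp only [Pi.smul_apply, smul_eq_mul] at this
      rw [this]
    rw [h2, hμ, Finset.sum_mul]
    refine Finset.sum_congr rfl fun k _ => by ring
  -- assemble the answer
  refine ⟨by rw [hgoalM]; exact hrank1, (μ.val : ℤ), (fun i => M i j₀), ?_, ?_, ?_, ?_⟩
  · -- eigenvector condition
    intro i
    rw [← ZMod.intCast_zmod_eq_zero_iff_dvd]
    have h1 : fK ((adjMat ℤ G *ᵥ fun i => M i j₀) i)
        = (A' *ᵥ (⇑fK ∘ fun i => M i j₀)) i :=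
      RingHom.map_mulVec fK _ _ i
    have h1' : (A' *ᵥ (⇑fK ∘ fun i => M i j₀)) i = (A' *ᵥ z') i := rfl
    have h2 : ((μ.val : ℤ) : K) = μ := by
      rw [Int.cast_natCast]
      exact (ZMod.natCast_val μ).trans (ZMod.cast_id p μ)
    have h3 : ((M i j₀ : ℤ) : K) = z' i := rfl
    push_cast
    rw [show ((adjMat ℤ G *ᵥ fun i => M i j₀) i : K)
        = (A' *ᵥ z') i from h1.trans h1', hAz' i]
    rw [show ((μ.val : ℕ) : K) = μ from
      (ZMod.natCast_val μ).trans (ZMod.cast_id p μ), h3, sub_self]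
  · -- eᵀ z ≡ 0
    have h1 : (fun _ => (1:ℤ)) ⬝ᵥ (fun i => M i j₀) = (ℓ : ℤ) := by
      have := congrFun hMTe j₀
      simpa [Matrix.mulVec, dotProduct, Matrix.transpose_apply, mul_comm] using this
    rw [h1]
    exact Int.natCast_dvd_natCast.mpr hpl
  · -- zᵀ z ≡ 0
    have h1 : (fun i => M i j₀) ⬝ᵥ (fun i => M i j₀) = (ℓ : ℤ)^2 := by
      have := congrFun (congrFun hMTM j₀) j₀
      simpa [Matrix.mul_apply, dotProduct, Matrix.transpose_apply, Matrix.smul_apply,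
        Matrix.one_apply] using this
    rw [h1]
    exact Dvd.dvd.trans (Int.natCast_dvd_natCast.mpr hpl) (dvd_pow_self _ (by norm_num))
  · -- z ≢ 0 mod p
    intro h
    apply hij
    have := h i₀
    have h1 : ((M i₀ j₀ : ℤ) : K) = 0 := (ZMod.intCast_zmod_eq_zero_iff_dvd _ _).mpr this
    simpa [hM', Matrix.map_apply, hfK] using h1
end

section
/- Let G be a graph on n vertices with walk matrix W, let p be a prime, and suppose the rank of W over the field with p elements is n−1. Let z be an integer vector with Wᵀz ≡ 0 (mod p) and z ≢ 0 (mod p). If there exists an integer vector x such that Wᵀx ≡ (Wᵀz)/p (mod p) (where (Wᵀz)/p denotes the integer vector obtained by dividing each entry of Wᵀz by p), then p² divides det(W). -/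
open Matrix

/-- **Corollary 3.5.** Suppose `rank_p W = n − 1` and `Wᵀz ≡ 0`,
`z ≢ 0 (mod p)`. If some integer vector `x` satisfies `Wᵀx ≡ (Wᵀz)/p (mod p)`,
then `p² ∣ det W`. -/
theorem stmt_8 {n : ℕ} (G : SimpleGraph (Fin n))
    (W : Matrix (Fin n) (Fin n) ℤ) (hW : W = walkMatrix (adjMat ℤ G))
    (p : ℕ) (hp : p.Prime)
    (hrank : (W.map (Int.cast : ℤ → ZMod p)).rank = n - 1)
    (z : Fin n → ℤ)
    (hz1 : ∀ i, (p : ℤ) ∣ (Wᵀ *ᵥ z) i)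
    (hz2 : ¬(∀ i, (p : ℤ) ∣ z i))
    (hx : ∃ x : Fin n → ℤ, ∀ i, (p : ℤ) ∣ ((Wᵀ *ᵥ x) i - (Wᵀ *ᵥ z) i / p)) :
    (p : ℤ) ^ 2 ∣ W.det := by
  obtain ⟨x, hx⟩ := hx
  set v : Fin n → ℤ := z - (p : ℤ) • x with hv
  push_neg at hz2
  obtain ⟨i0, hi0⟩ := hz2
  have hpv : ¬ (p : ℤ) ∣ v i0 := by
    intro h
    apply hi0
    have : z i0 = v i0 + (p : ℤ) * x i0 := by simp [hv]
    rw [this]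
    exact dvd_add h (Dvd.intro _ rfl)
  -- Wᵀ v ≡ 0 mod p²
  have hWv : ∀ i, (p : ℤ) ^ 2 ∣ (Wᵀ *ᵥ v) i := by
    intro i
    have h1 := hz1 i
    have h2 := hx i
    have hvz : (Wᵀ *ᵥ v) i = (Wᵀ *ᵥ z) i - (p : ℤ) * (Wᵀ *ᵥ x) i := by
      have : Wᵀ *ᵥ v = Wᵀ *ᵥ z - (p : ℤ) • (Wᵀ *ᵥ x) := by
        rw [hv, Matrix.mulVec_sub, Matrix.mulVec_smul]
      rw [this]; simp
    have hq : (p : ℤ) * ((Wᵀ *ᵥ z) i / p) = (Wᵀ *ᵥ z) i := Int.mul_ediv_cancel' h1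
    have : (Wᵀ *ᵥ v) i = -((p : ℤ) * ((Wᵀ *ᵥ x) i - (Wᵀ *ᵥ z) i / p)) := by
      rw [hvz, mul_sub, hq]; ring
    rw [this]
    obtain ⟨c, hc⟩ := h2
    rw [hc]
    exact ⟨-c, by ring⟩
  -- adjugate identity
  have hadj : (Wᵀ).adjugate *ᵥ (Wᵀ *ᵥ v) = W.det • v := by
    rw [Matrix.mulVec_mulVec, Matrix.adjugate_mul, Matrix.det_transpose,
      Matrix.smul_mulVec, Matrix.one_mulVec]
  have hdvd : (p : ℤ) ^ 2 ∣ W.det * v i0 := by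
    have h1 : W.det * v i0 = ((Wᵀ).adjugate *ᵥ (Wᵀ *ᵥ v)) i0 := by
      rw [hadj]; simp
    rw [h1, Matrix.mulVec]
    exact Finset.dvd_sum fun j _ => Dvd.dvd.mul_left (hWv j) _
  have hprime : Prime ((p : ℤ)) := Nat.prime_iff_prime_int.mp hp
  have hcop : IsCoprime ((p : ℤ) ^ 2) (v i0) :=
    ((hprime.coprime_iff_not_dvd).mpr hpv).pow_left
  exact hcop.dvd_of_dvd_mul_right hdvd
end

section
/- Let G be a simple graph on n vertices with walk matrix W = [e, Ae, A²e, …, A^{n−1}e]. Then the rank of W over the field with two elements is at most ⌈n/2⌉. -/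
open Matrix

namespace Stmt14Aux

/-- Subadditivity of matrix rank. -/
lemma rank_add_le' {m k K : Type*} [Fintype m] [Fintype k] [Field K]
    (A B : Matrix m k K) : (A + B).rank ≤ A.rank + B.rank := by
  classical
  rw [Matrix.rank, Matrix.rank, Matrix.rank, Matrix.mulVecLin_add]
  have hle : LinearMap.range (A.mulVecLin + B.mulVecLin) ≤
      LinearMap.range A.mulVecLin ⊔ LinearMap.range B.mulVecLin := by
    rintro y ⟨x, rfl⟩
    exact Submodule.add_mem_sup ⟨x, rfl⟩ ⟨x, rfl⟩
  exact (Submodule.finrank_mono hle).trans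
    (Submodule.finrank_add_le_finrank_add_finrank _ _)

/-- The quadratic form of a symmetric matrix with zero diagonal vanishes in char 2. -/
lemma quad_zero {n : ℕ} (M : Matrix (Fin n) (Fin n) (ZMod 2)) (hs : Mᵀ = M)
    (hd : ∀ i, M i i = 0) (x : Fin n → ZMod 2) : x ⬝ᵥ (M *ᵥ x) = 0 := by
  classical
  have hMsymm : ∀ i j, M j i = M i j := fun i j => by
    conv_lhs => rw [← hs]
    rfl
  have hrw : x ⬝ᵥ (M *ᵥ x) =
      ∑ p ∈ Finset.univ ×ˢ Finset.univ, x p.1 * M p.1 p.2 * x p.2 := by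
    rw [Finset.sum_product]
    simp [dotProduct, Matrix.mulVec, Finset.mul_sum, mul_assoc]
  rw [hrw]
  refine Finset.sum_ninvolution Prod.swap ?_ ?_ (fun _ => Finset.mem_product.2
    ⟨Finset.mem_univ _, Finset.mem_univ _⟩) (fun a => Prod.swap_swap a)
  · intro a
    have h1 : x a.2 * M a.2 a.1 * x a.1 = x a.1 * M a.1 a.2 * x a.2 := by
      rw [hMsymm]; ring
    simp only [Prod.fst_swap, Prod.snd_swap, h1]
    exact CharTwo.add_self_eq_zero _
  · intro a ha h
    have h2 : a.2 = a.1 := congrArg Prod.fst h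
    exact ha (by rw [h2, hd, mul_zero, zero_mul])

end Stmt14Aux

/-- **Lemma 4.2.** The rank of the walk matrix over `F₂` is at most
`⌈n/2⌉`. -/
theorem stmt_14 {n : ℕ} (G : SimpleGraph (Fin n))
    (W : Matrix (Fin n) (Fin n) ℤ) (hW : W = walkMatrix (adjMat ℤ G)) :
    (W.map (Int.cast : ℤ → ZMod 2)).rank ≤ (n + 1) / 2 := by
  classical
  rcases Nat.eq_zero_or_pos n with rfl | hn
  · simpa using (W.map (Int.cast : ℤ → ZMod 2)).rank_le_card_width
  set B : Matrix (Fin n) (Fin n) (ZMod 2) := adjMat (ZMod 2) G with hB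
  -- basic properties of B
  have hBsymm : Bᵀ = B := by
    ext i j
    simp only [hB, adjMat, Matrix.transpose_apply, Matrix.of_apply]
    rw [G.adj_comm]
  have hBdiag : ∀ i, B i i = 0 := fun i => by
    simp [hB, adjMat]
  have hBk : ∀ k : ℕ, (B ^ k)ᵀ = B ^ k := fun k => by
    rw [Matrix.transpose_pow, hBsymm]
  -- the walk matrix over F₂
  set W' : Matrix (Fin n) (Fin n) (ZMod 2) := W.map (Int.cast : ℤ → ZMod 2) with hW'
  have hmap : (adjMat ℤ G).map (Int.cast : ℤ → ZMod 2) = B := by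
    ext i j
    simp [adjMat, hB, apply_ite (Int.cast : ℤ → ZMod 2)]
  have hmap2 : (adjMat ℤ G).map ⇑(Int.castRingHom (ZMod 2)) = B := hmap
  have hpow : ∀ j : ℕ,
      ((adjMat ℤ G) ^ j).map ⇑(Int.castRingHom (ZMod 2)) = B ^ j := by
    intro j
    induction j with
    | zero =>
      rw [pow_zero, pow_zero]
      exact Matrix.map_one _ (by simp) (by simp)
    | succ k ihk =>
      rw [pow_succ, pow_succ, Matrix.map_mul, ihk, hmap2]
  have hW'eq : W' = walkMatrix B := by
    ext i j
    have hmv := (Int.castRingHom (ZMod 2)).map_mulVec ((adjMat ℤ G) ^ (j : ℕ))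
      (fun _ => (1 : ℤ)) i
    simp only [hW', hW, walkMatrix, Matrix.map_apply, Matrix.of_apply]
    rw [show ((Int.cast : ℤ → ZMod 2) (((adjMat ℤ G) ^ (j : ℕ) *ᵥ fun _ => 1) i))
        = ((Int.castRingHom (ZMod 2)) (((adjMat ℤ G) ^ (j : ℕ) *ᵥ fun _ => 1) i)) from rfl,
      hmv, hpow j]
    simp [Function.comp_def]
  -- the all-ones vector and the walk sums
  set e : Fin n → ZMod 2 := fun _ => 1 with he
  have hdot : ∀ k : ℕ, ∀ w : Fin n → ZMod 2, e ⬝ᵥ (B ^ k *ᵥ w) = (B ^ k *ᵥ e) ⬝ᵥ w := by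
    intro k w
    rw [Matrix.dotProduct_mulVec]
    conv_lhs => rw [← hBk k]
    rw [Matrix.vecMul_transpose]
  have key : ∀ m : ℕ, 1 ≤ m → e ⬝ᵥ (B ^ m *ᵥ e) = 0 := by
    intro m
    induction m using Nat.strong_induction_on with
    | _ m ih =>
      intro hm
      rcases Nat.even_or_odd m with ⟨k, hk⟩ | ⟨k, hk⟩
      · -- m = k + k, k ≥ 1
        have hk1 : 1 ≤ k := by omega
        have : e ⬝ᵥ (B ^ m *ᵥ e) = (B ^ k *ᵥ e) ⬝ᵥ (B ^ k *ᵥ e) := by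
          rw [hk, pow_add, ← Matrix.mulVec_mulVec, hdot]
        rw [this]
        have hsq : ∀ a : ZMod 2, a * a = a := by decide
        have : (B ^ k *ᵥ e) ⬝ᵥ (B ^ k *ᵥ e) = e ⬝ᵥ (B ^ k *ᵥ e) := by
          simp only [dotProduct, hsq, he, one_mul]
        rw [this]
        exact ih k (by omega) hk1
      · -- m = 2k + 1
        have : e ⬝ᵥ (B ^ m *ᵥ e) = (B ^ k *ᵥ e) ⬝ᵥ (B *ᵥ (B ^ k *ᵥ e)) := by
          rw [hk, show 2 * k + 1 = k + (1 + k) by ring, pow_add, pow_add, pow_one,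
            ← Matrix.mulVec_mulVec, hdot, ← Matrix.mulVec_mulVec]
        rw [this]
        exact Stmt14Aux.quad_zero B hBsymm hBdiag _
  -- the Gram matrix W'ᵀ * W'
  set z : Fin n := ⟨0, hn⟩ with hz
  have gram : ∀ i j : Fin n, (W'ᵀ * W') i j = e ⬝ᵥ (B ^ ((i : ℕ) + (j : ℕ)) *ᵥ e) := by
    intro i j
    have h1 : (W'ᵀ * W') i j = (B ^ (i : ℕ) *ᵥ e) ⬝ᵥ (B ^ (j : ℕ) *ᵥ e) := by
      simp only [Matrix.mul_apply, Matrix.transpose_apply, hW'eq, walkMatrix,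
        Matrix.of_apply, dotProduct, he]
    rw [h1, ← hdot, Matrix.mulVec_mulVec, ← pow_add]
  -- off-(z,z) entries vanish
  set P : Matrix (Fin n) (Fin n) (ZMod 2) :=
    Matrix.of (fun i j => if i = z ∧ j = z then (1 : ZMod 2) else 0) with hP
  set c : ZMod 2 := (W'ᵀ * W') z z with hc
  have hGram : W'ᵀ * W' = c • P := by
    ext i j
    by_cases h : i = z ∧ j = z
    · rcases h with ⟨rfl, rfl⟩
      simp [hP, hc]
    · have hij : 1 ≤ (i : ℕ) + (j : ℕ) := by
        rcases Decidable.not_and_iff_or_not.mp h with h' | h' <;>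
          · have : (i : ℕ) ≠ 0 ∨ (j : ℕ) ≠ 0 := by
              first
              | exact Or.inl (fun hc0 => h' (Fin.ext hc0))
              | exact Or.inr (fun hc0 => h' (Fin.ext hc0))
            omega
      rw [gram i j, key _ hij]
      simp [hP, h]
  -- P is idempotent, so (W'ᵀ * W') * (1 - P) = 0
  have hPP : P * P = P := by
    ext i j
    simp only [hP, Matrix.mul_apply, Matrix.of_apply]
    rw [Finset.sum_eq_single z]
    · by_cases h1 : i = z <;> by_cases h2 : j = z <;> simp [h1, h2]
    · intro b _ hb
      simp [hb]
    · simp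
  have hzero : W'ᵀ * (W' * (1 - P)) = 0 := by
    rw [← Matrix.mul_assoc, hGram, Matrix.mul_sub, Matrix.mul_one, Matrix.smul_mul, hPP,
      sub_self]
  -- rank bound via Sylvester-type argument
  have h1 : W'ᵀ.rank + (W' * (1 - P)).rank ≤ n := by
    have := Matrix.rank_add_rank_le_card_of_mul_eq_zero hzero
    simpa using this
  have hPrank : P.rank ≤ 1 := by
    have hfact : P = (Matrix.of fun i (_ : Fin 1) => if i = z then (1 : ZMod 2) else 0) *
        (Matrix.of fun (_ : Fin 1) j => if j = z then (1 : ZMod 2) else 0) := by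
      ext i j
      by_cases h1 : i = z <;> by_cases h2 : j = z <;>
        simp [hP, Matrix.mul_apply, h1, h2]
    calc P.rank ≤ (Matrix.of fun i (_ : Fin 1) =>
          if i = z then (1 : ZMod 2) else 0).rank := by
          rw [hfact]; exact Matrix.rank_mul_le_left _ _
      _ ≤ Fintype.card (Fin 1) := Matrix.rank_le_card_width _
      _ = 1 := by simp
  have h2 : W'.rank ≤ (W' * (1 - P)).rank + 1 := by
    have hsplit : W' = W' * (1 - P) + W' * P := by
      rw [← Matrix.mul_add, sub_add_cancel, Matrix.mul_one]
    calc W'.rank = (W' * (1 - P) + W' * P).rank := by rw [← hsplit]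
      _ ≤ (W' * (1 - P)).rank + (W' * P).rank := Stmt14Aux.rank_add_le' _ _
      _ ≤ (W' * (1 - P)).rank + P.rank := by
          exact Nat.add_le_add_left (Matrix.rank_mul_le_right _ _) _
      _ ≤ (W' * (1 - P)).rank + 1 := Nat.add_le_add_left hPrank _
  have h3 : W'ᵀ.rank = W'.rank := Matrix.rank_transpose W'
  omega
end
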